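/- arXiv:1905.11490 — 2 statements merged into one kernel-verified Lean document; each statement's English description precedes it below -/
import Mathlib

section
/- Let A be an N×r complex matrix and B an r×N complex matrix, and let λ be a nonzero complex number. Then for every natural number m, the kernels of (A·B − λ·I_N)^m and of (B·A − λ·I_r)^m have the same dimension: dim ker((A·B − λ·I_N)^m) = dim ker((B·A − λ·I_r)^m). In particular, the Jordan block structures of A·B and B·A at any nonzero eigenvalue are identical. -/
open Matrix

private lemma ker_pow_dim_le (N r : ℕ)
    (A : Matrix (Fin N) (Fin r) ℂ) (B : Matrix (Fin r) (Fin N) ℂ)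
    (lam : ℂ) (hlam : lam ≠ 0) (m : ℕ) :
    Module.finrank ℂ
        (LinearMap.ker ((A * B - lam • (1 : Matrix (Fin N) (Fin N) ℂ)) ^ m).mulVecLin) ≤
      Module.finrank ℂ
        (LinearMap.ker ((B * A - lam • (1 : Matrix (Fin r) (Fin r) ℂ)) ^ m).mulVecLin) := by
  set P : Matrix (Fin N) (Fin N) ℂ := A * B - lam • 1 with hP
  set Q : Matrix (Fin r) (Fin r) ℂ := B * A - lam • 1 with hQ
  have hcomm : B * P = Q * B := by
    simp [hP, hQ, Matrix.mul_sub, Matrix.sub_mul, Matrix.mul_smul, Matrix.smul_mul,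
      Matrix.mul_assoc]
  have hcommn : ∀ n : ℕ, B * P ^ n = Q ^ n * B := by
    intro n
    induction n with
    | zero => simp
    | succ n ih =>
        rw [pow_succ, pow_succ, ← Matrix.mul_assoc, ih, Matrix.mul_assoc, hcomm,
          ← Matrix.mul_assoc]
  have hmaps : ∀ x ∈ LinearMap.ker (P ^ m).mulVecLin,
      B.mulVecLin x ∈ LinearMap.ker (Q ^ m).mulVecLin := by
    intro x hx
    simp only [LinearMap.mem_ker, mulVecLin_apply] at hx ⊢
    rw [mulVec_mulVec, ← hcommn, ← mulVec_mulVec, hx, mulVec_zero]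
  let f := B.mulVecLin.restrict hmaps
  have hinj : Function.Injective f := by
    intro x y hxy
    have hxy' : B.mulVecLin (x - y : (Fin N → ℂ)) = 0 := by
      have := congrArg (Subtype.val) hxy
      simp only [LinearMap.restrict_apply, f] at this
      simp [map_sub, this, sub_eq_zero]
    -- show x - y = 0
    set z : Fin N → ℂ := (x : Fin N → ℂ) - (y : Fin N → ℂ) with hz
    have hzker : (P ^ m).mulVecLin z = 0 := by
      have hx := x.2
      have hy := y.2
      simp only [LinearMap.mem_ker] at hx hy
      simp [hz, map_sub, hx, hy]
    have hBz : B *ᵥ z = 0 := hxy'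
    have hPz : P *ᵥ z = (-lam) • z := by
      simp [hP, sub_mulVec, ← mulVec_mulVec, hBz, smul_mulVec, neg_smul]
    have hPnz : ∀ n : ℕ, (P ^ n) *ᵥ z = ((-lam) ^ n) • z := by
      intro n
      induction n with
      | zero => simp
      | succ n ih =>
          rw [pow_succ, ← mulVec_mulVec, hPz, mulVec_smul, ih, smul_smul, pow_succ,
            mul_comm]
    have : ((-lam) ^ m) • z = 0 := by
      rw [← hPnz]; simpa using hzker
    have hz0 : z = 0 := by
      have hne : (-lam) ^ m ≠ 0 := pow_ne_zero _ (neg_ne_zero.mpr hlam)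
      exact (smul_eq_zero.mp this).resolve_left hne
    have : (x : Fin N → ℂ) = (y : Fin N → ℂ) := by
      rwa [hz, sub_eq_zero] at hz0
    exact Subtype.ext this
  exact LinearMap.finrank_le_finrank_of_injective hinj

/-- For `λ ≠ 0` and every `m`, `dim ker((A*B − λI)^m) = dim ker((B*A − λI)^m)`;
hence the Jordan structures of `A*B` and `B*A` at nonzero eigenvalues agree. -/
theorem ker_pow_dim_eq (N r : ℕ)
    (A : Matrix (Fin N) (Fin r) ℂ) (B : Matrix (Fin r) (Fin N) ℂ)
    (lam : ℂ) (hlam : lam ≠ 0) (m : ℕ) :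
    Module.finrank ℂ
        (LinearMap.ker ((A * B - lam • (1 : Matrix (Fin N) (Fin N) ℂ)) ^ m).mulVecLin) =
      Module.finrank ℂ
        (LinearMap.ker ((B * A - lam • (1 : Matrix (Fin r) (Fin r) ℂ)) ^ m).mulVecLin) := by
  exact le_antisymm (ker_pow_dim_le N r A B lam hlam m) (ker_pow_dim_le r N B A lam hlam m)
end

section
/- Let A be an N×r complex matrix and B an r×N complex matrix with N ≥ r, and suppose rank(A) = rank(B) = r (full rank). Then for every natural number m ≥ 1, dim ker((A·B)^m) = (N − r) + dim ker((B·A)^{m−1}). Equivalently, the Jordan structure of A·B at the eigenvalue 0 is obtained from that of B·A by increasing each Jordan block size k_i (for blocks at 0, including 1×1 blocks) to k_i + 1 and appending N − r − ℓ additional 1×1 zero blocks, where ℓ is the geometric multiplicity of 0 for B·A. -/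
open Matrix

lemma aux_finrank_comap_of_surjective {V W : Type*} [AddCommGroup V] [Module ℂ V]
    [AddCommGroup W] [Module ℂ W] [FiniteDimensional ℂ V]
    (f : V →ₗ[ℂ] W) (hf : Function.Surjective f) (S : Submodule ℂ W) :
    Module.finrank ℂ (S.comap f) =
      Module.finrank ℂ (LinearMap.ker f) + Module.finrank ℂ S := by
  have hmem : ∀ x : V, x ∈ S.comap f → f x ∈ S := fun x hx => hx
  have g := f.restrict hmem
  have hrn := LinearMap.finrank_range_add_finrank_ker (f.restrict hmem)
  have hker : LinearMap.ker (f.restrict hmem) = (LinearMap.ker f).comap (S.comap f).subtype :=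
    LinearMap.ker_restrict hmem
  have hle : LinearMap.ker f ≤ S.comap f := by
    intro x hx
    simp [Submodule.mem_comap, LinearMap.mem_ker.mp hx]
  have hkerdim : Module.finrank ℂ (LinearMap.ker (f.restrict hmem)) =
      Module.finrank ℂ (LinearMap.ker f) := by
    rw [hker]
    exact (Submodule.comapSubtypeEquivOfLe hle).finrank_eq
  have hsurj : Function.Surjective (f.restrict hmem) := by
    rintro ⟨s, hs⟩
    obtain ⟨x, hx⟩ := hf s
    exact ⟨⟨x, by simp [Submodule.mem_comap, hx, hs]⟩, Subtype.ext hx⟩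
  have hrange : Module.finrank ℂ (LinearMap.range (f.restrict hmem)) =
      Module.finrank ℂ S := by
    rw [LinearMap.range_eq_top.mpr hsurj]
    exact (Submodule.topEquiv).finrank_eq.trans rfl
  omega

lemma aux_pow_AB (N r : ℕ) (A : Matrix (Fin N) (Fin r) ℂ) (B : Matrix (Fin r) (Fin N) ℂ)
    (k : ℕ) : (A * B) ^ (k + 1) = A * ((B * A) ^ k * B) := by
  induction k with
  | zero => simp
  | succ k ih =>
    rw [pow_succ, ih, pow_succ]
    simp only [Matrix.mul_assoc]

/-- If `A`, `B` have full rank `r` and `N ≥ r`, then for `m ≥ 1`,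
`dim ker((A*B)^m) = (N − r) + dim ker((B*A)^(m−1))`: the Jordan structure of
`A*B` at 0 is that of `B*A` with each block enlarged by 1, plus `N − r − ℓ`
extra 1×1 zero blocks. -/
theorem ker_pow_AB_eq_ker_pow_BA_zero (N r : ℕ) (hNr : r ≤ N)
    (A : Matrix (Fin N) (Fin r) ℂ) (B : Matrix (Fin r) (Fin N) ℂ)
    (hA : A.rank = r) (hB : B.rank = r) (m : ℕ) (hm : 1 ≤ m) :
    Module.finrank ℂ (LinearMap.ker ((A * B) ^ m).mulVecLin) =
      (N - r) + Module.finrank ℂ (LinearMap.ker ((B * A) ^ (m - 1)).mulVecLin) := by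
  obtain ⟨k, rfl⟩ : ∃ k, m = k + 1 := ⟨m - 1, by omega⟩
  rw [show k + 1 - 1 = k from rfl]
  -- A injective
  have hArn := LinearMap.finrank_range_add_finrank_ker A.mulVecLin
  have hApi : Module.finrank ℂ (Fin r → ℂ) = r := by simp
  have hAker : LinearMap.ker A.mulVecLin = ⊥ := by
    have : Module.finrank ℂ (LinearMap.ker A.mulVecLin) = 0 := by
      rw [Matrix.rank] at hA; omega
    exact Submodule.finrank_eq_zero.mp this
  -- B surjective
  have hBrn := LinearMap.finrank_range_add_finrank_ker B.mulVecLin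
  have hBpi : Module.finrank ℂ (Fin N → ℂ) = N := by simp
  have hBsurj : Function.Surjective B.mulVecLin := by
    rw [← LinearMap.range_eq_top]
    apply Submodule.eq_top_of_finrank_eq
    rw [← Matrix.rank] at *
    simp [hB]
  have hBker : Module.finrank ℂ (LinearMap.ker B.mulVecLin) = N - r := by
    rw [Matrix.rank] at hB; omega
  rw [aux_pow_AB, Matrix.mulVecLin_mul, LinearMap.ker_comp_of_ker_eq_bot _ hAker,
    Matrix.mulVecLin_mul, LinearMap.ker_comp,
    aux_finrank_comap_of_surjective _ hBsurj, hBker]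
end
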